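/- arXiv:2506.13671 — 3 statements merged into one kernel-verified Lean document; each statement's English description precedes it below -/
import Mathlib

section
/- Under the setup of a zero-mean group-symmetric kernel h, if a projection h_{a,b} and the full kernel h are evaluated at argument tuples sharing exactly r common first-sample observations and s common second-sample observations, then E[h_{a,b}(...) · h(...)] = ξ_{r,s} := Var(h_{r,s}). -/
/-!
The mixed moment `E[h(X ∘ α) · h(X ∘ β)]` of a symmetric kernel evaluated at two injective index
tuples of an i.i.d. sample depends only on how many indices the tuples share: permuting the
arguments of `h` and relabelling the observations (an i.i.d. law is invariant under injective
reindexing) bring every such configuration to one canonical configuration.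
Integrating out the fresh coordinates of the projection, `E[h_{a,b}(X ∘ σ) · h(X ∘ τ)]` is such a
moment with overlaps `r`, `s`. So is `E[h_{r,s}²]`, the same moment for two copies of `h` that share
exactly their first `r`, `s` arguments; and `E[h_{r,s}] = E[h] = 0`, so `E[h_{r,s}²] = ξ_{r,s}`.
-/

open MeasureTheory ProbabilityTheory

/-- The `(a,b)`-projection of a two-sample kernel `h`, realized via independence as the
integral of `h` over the coordinates beyond the first `a` (resp. `b`) ones. -/
noncomputable def proj {m0 m1 : ℕ} (F0 F1 : Measure ℝ)
    (h : (Fin m0 → ℝ) → (Fin m1 → ℝ) → ℝ) (a b : ℕ)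
    (u : Fin a → ℝ) (v : Fin b → ℝ) : ℝ :=
  ∫ p : (Fin m0 → ℝ) × (Fin m1 → ℝ),
    h (fun i => if hi : (i : ℕ) < a then u ⟨i, hi⟩ else p.1 i)
      (fun j => if hj : (j : ℕ) < b then v ⟨j, hj⟩ else p.2 j)
  ∂((Measure.pi fun _ : Fin m0 => F0).prod (Measure.pi fun _ : Fin m1 => F1))

/-- `ξ_{a,b}`, the variance of the `(a,b)`-projection evaluated at i.i.d. arguments. -/
noncomputable def xi {m0 m1 : ℕ} (F0 F1 : Measure ℝ)
    (h : (Fin m0 → ℝ) → (Fin m1 → ℝ) → ℝ) (a b : ℕ) : ℝ :=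
  (∫ q : (Fin a → ℝ) × (Fin b → ℝ), (proj F0 F1 h a b q.1 q.2) ^ 2
      ∂((Measure.pi fun _ : Fin a => F0).prod (Measure.pi fun _ : Fin b => F1))) -
  (∫ q : (Fin a → ℝ) × (Fin b → ℝ), proj F0 F1 h a b q.1 q.2
      ∂((Measure.pi fun _ : Fin a => F0).prod (Measure.pi fun _ : Fin b => F1))) ^ 2

open Function Finset

theorem measurePreserving_pi_comp_of_injective {ι κ α : Type*} [Fintype ι] [Fintype κ]
    [MeasurableSpace α] (μ : Measure α) [IsProbabilityMeasure μ] {j : κ → ι}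
    (hj : Injective j) :
    MeasurePreserving (fun w : ι → α => w ∘ j) (Measure.pi fun _ => μ)
      (Measure.pi fun _ => μ) := by
  classical
  have hm : Measurable (fun w : ι → α => w ∘ j) := by fun_prop
  refine ⟨hm, (Measure.pi_eq fun s hs => ?_).symm⟩
  have hpre : (fun w : ι → α => w ∘ j) ⁻¹' Set.univ.pi s =
      Set.univ.pi (extend j s fun _ => Set.univ) := by
    ext w
    simp only [Set.mem_preimage, Set.mem_univ_pi, comp_apply]
    refine ⟨fun hw i => ?_, fun hw k => by simpa [hj.extend_apply] using hw (j k)⟩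
    by_cases hi : ∃ k, j k = i
    · obtain ⟨k, rfl⟩ := hi
      simpa [hj.extend_apply] using hw k
    · simp [extend_apply' _ _ _ hi]
  rw [Measure.map_apply hm (.univ_pi hs), hpre, Measure.pi_pi]
  refine (Fintype.prod_of_injective j hj _ _ (fun i hi => ?_) fun k => ?_).symm
  · rw [extend_apply' _ _ _ (by simpa using hi), measure_univ]
  · rw [hj.extend_apply]

namespace MeasurableEquiv

def prodProdProdComm (A B C D : Type*) [MeasurableSpace A] [MeasurableSpace B]
    [MeasurableSpace C] [MeasurableSpace D] : (A × B) × C × D ≃ᵐ (A × C) × B × D where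
  toEquiv := Equiv.prodProdProdComm A B C D
  measurable_toFun := by
    change Measurable fun z : (A × B) × C × D => ((z.1.1, z.2.1), (z.1.2, z.2.2))
    fun_prop
  measurable_invFun := by
    change Measurable fun z : (A × C) × B × D => ((z.1.1, z.2.1), (z.1.2, z.2.2))
    fun_prop

end MeasurableEquiv

theorem measurePreserving_prodProdProdComm {A B C D : Type*} [MeasurableSpace A]
    [MeasurableSpace B] [MeasurableSpace C] [MeasurableSpace D] (μa : Measure A)
    (μb : Measure B) (μc : Measure C) (μd : Measure D) [SigmaFinite μa] [SigmaFinite μb]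
    [SigmaFinite μc] [SigmaFinite μd] :
    MeasurePreserving (MeasurableEquiv.prodProdProdComm A B C D)
      ((μa.prod μb).prod (μc.prod μd)) ((μa.prod μc).prod (μb.prod μd)) := by
  -- reassociate, swap the middle factors `B × C`, reassociate back
  exact (MeasurePreserving.symm _ (measurePreserving_prodAssoc μa μc (μb.prod μd))).comp <|
    ((MeasurePreserving.id μa).prod <| (measurePreserving_prodAssoc μc μb μd).comp <|
      (Measure.measurePreserving_swap.prod (MeasurePreserving.id μd)).comp
        (MeasurePreserving.symm _ (measurePreserving_prodAssoc μb μc μd))).comp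
    (measurePreserving_prodAssoc μa μb (μc.prod μd))

section TwoSample

variable {X0 X1 : Type*} [MeasurableSpace X0] [MeasurableSpace X1]
  (F0 : Measure X0) (F1 : Measure X1) [IsProbabilityMeasure F0] [IsProbabilityMeasure F1]

noncomputable def twoSampleLaw (ι0 ι1 : Type*) [Fintype ι0] [Fintype ι1] :
    Measure ((ι0 → X0) × (ι1 → X1)) :=
  (Measure.pi fun _ : ι0 => F0).prod (Measure.pi fun _ : ι1 => F1)

instance {ι0 ι1 : Type*} [Fintype ι0] [Fintype ι1] :
    IsProbabilityMeasure (twoSampleLaw F0 F1 ι0 ι1) := by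
  unfold twoSampleLaw; infer_instance

variable {ι0 ι1 κ0 κ1 : Type*}

variable (X0 X1 ι0 ι1 κ0 κ1) in
def twoSampleMerge : ((ι0 → X0) × (ι1 → X1)) × ((κ0 → X0) × (κ1 → X1)) ≃ᵐ
    (ι0 ⊕ κ0 → X0) × (ι1 ⊕ κ1 → X1) :=
  (MeasurableEquiv.prodProdProdComm _ _ _ _).trans
    ((MeasurableEquiv.sumPiEquivProdPi fun _ : ι0 ⊕ κ0 => X0).symm.prodCongr
      (MeasurableEquiv.sumPiEquivProdPi fun _ : ι1 ⊕ κ1 => X1).symm)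

theorem twoSampleMerge_apply (z : ((ι0 → X0) × (ι1 → X1)) × ((κ0 → X0) × (κ1 → X1))) :
    twoSampleMerge X0 X1 ι0 ι1 κ0 κ1 z = (Sum.elim z.1.1 z.2.1, Sum.elim z.1.2 z.2.2) := by
  ext i <;> cases i <;> rfl

variable [Fintype ι0] [Fintype ι1] [Fintype κ0] [Fintype κ1]

theorem measurePreserving_twoSampleLaw_comp {j0 : κ0 → ι0} {j1 : κ1 → ι1}
    (hj0 : Injective j0) (hj1 : Injective j1) :
    MeasurePreserving (fun w : (ι0 → X0) × (ι1 → X1) => (w.1 ∘ j0, w.2 ∘ j1))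
      (twoSampleLaw F0 F1 ι0 ι1) (twoSampleLaw F0 F1 κ0 κ1) :=
  (measurePreserving_pi_comp_of_injective F0 hj0).prod
    (measurePreserving_pi_comp_of_injective F1 hj1)

theorem integral_twoSampleLaw_comp {j0 : κ0 → ι0} {j1 : κ1 → ι1}
    (hj0 : Injective j0) (hj1 : Injective j1) {g : (κ0 → X0) × (κ1 → X1) → ℝ}
    (hg : AEStronglyMeasurable g (twoSampleLaw F0 F1 κ0 κ1)) :
    ∫ w, g (w.1 ∘ j0, w.2 ∘ j1) ∂twoSampleLaw F0 F1 ι0 ι1 =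
      ∫ v, g v ∂twoSampleLaw F0 F1 κ0 κ1 := by
  have hj := measurePreserving_twoSampleLaw_comp F0 F1 hj0 hj1
  rw [← hj.map_eq, integral_map hj.measurable.aemeasurable (hj.map_eq ▸ hg)]

theorem measurePreserving_twoSampleMerge :
    MeasurePreserving (twoSampleMerge X0 X1 ι0 ι1 κ0 κ1)
      ((twoSampleLaw F0 F1 ι0 ι1).prod (twoSampleLaw F0 F1 κ0 κ1))
      (twoSampleLaw F0 F1 (ι0 ⊕ κ0) (ι1 ⊕ κ1)) :=
  ((measurePreserving_sumPiEquivProdPi_symm fun _ : ι0 ⊕ κ0 => F0).prod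
    (measurePreserving_sumPiEquivProdPi_symm fun _ : ι1 ⊕ κ1 => F1)).comp
    (measurePreserving_prodProdProdComm _ _ _ _)

theorem integral_twoSampleMerge (g : (ι0 ⊕ κ0 → X0) × (ι1 ⊕ κ1 → X1) → ℝ) :
    ∫ z, g (Sum.elim z.1.1 z.2.1, Sum.elim z.1.2 z.2.2)
        ∂(twoSampleLaw F0 F1 ι0 ι1).prod (twoSampleLaw F0 F1 κ0 κ1) =
      ∫ v, g v ∂twoSampleLaw F0 F1 (ι0 ⊕ κ0) (ι1 ⊕ κ1) := by
  simpa only [twoSampleMerge_apply] using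
    (measurePreserving_twoSampleMerge F0 F1).integral_comp' g

theorem integral_integral_twoSampleMerge {g : (ι0 ⊕ κ0 → X0) × (ι1 ⊕ κ1 → X1) → ℝ}
    (hg : Integrable g (twoSampleLaw F0 F1 (ι0 ⊕ κ0) (ι1 ⊕ κ1))) :
    ∫ w, ∫ p, g (Sum.elim w.1 p.1, Sum.elim w.2 p.2) ∂twoSampleLaw F0 F1 κ0 κ1
        ∂twoSampleLaw F0 F1 ι0 ι1 =
      ∫ v, g v ∂twoSampleLaw F0 F1 (ι0 ⊕ κ0) (ι1 ⊕ κ1) := by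
  have hint := ((measurePreserving_twoSampleMerge F0 F1).integrable_comp_emb
    (MeasurableEquiv.measurableEmbedding _)).2 hg
  simp only [comp_def, twoSampleMerge_apply] at hint
  rw [integral_integral hint, integral_twoSampleMerge]

theorem sq_integral_twoSampleLaw (f : (ι0 → X0) × (ι1 → X1) → ℝ) :
    (∫ p, f p ∂twoSampleLaw F0 F1 ι0 ι1) ^ 2 =
      ∫ v, f (v.1 ∘ Sum.inl, v.2 ∘ Sum.inl) * f (v.1 ∘ Sum.inr, v.2 ∘ Sum.inr)
        ∂twoSampleLaw F0 F1 (ι0 ⊕ ι0) (ι1 ⊕ ι1) := by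
  rw [pow_two, ← integral_prod_mul, ← integral_twoSampleMerge]
  rfl

end TwoSample

theorem exists_perm_comp_eq {κ ι : Type*} [Finite κ] {α f : κ → ι} (hf : Injective f)
    (hrange : ∀ k, f k ∈ Set.range α) : ∃ π : Equiv.Perm κ, α ∘ π = f := by
  choose π hπ using hrange
  have hπinj : Injective π := fun k l hkl => hf (by rw [← hπ k, ← hπ l, hkl])
  exact ⟨Equiv.ofBijective π hπinj.bijective_of_finite, funext hπ⟩

theorem exists_injective_of_card_image_inter {m r : ℕ} {ι : Type*} [DecidableEq ι]
    {α β : Fin m → ι} (hα : Injective α) (hβ : Injective β)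
    (hr : #(univ.image α ∩ univ.image β) = r) :
    ∃ j : Fin r ⊕ (Fin (m - r) ⊕ Fin (m - r)) → ι, Injective j ∧
      (∀ k, j (Sum.map id Sum.inl k) ∈ Set.range α) ∧
      ∀ k, j (Sum.map id Sum.inr k) ∈ Set.range β := by
  set A := univ.image α
  set B := univ.image β
  have hA : #A = m := by simp [A, card_image_of_injective _ hα]
  have hB : #B = m := by simp [B, card_image_of_injective _ hβ]
  let eC := (equivFinOfCardEq hr).symm
  let eA := (equivFinOfCardEq (s := A \ B) (by rw [card_sdiff, inter_comm, hA, hr])).symm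
  let eB := (equivFinOfCardEq (s := B \ A) (by rw [card_sdiff, hB, hr])).symm
  refine ⟨Sum.elim (fun t => (eC t : ι)) (Sum.elim (fun t => (eA t : ι)) fun t => (eB t : ι)),
    ?_, ?_, ?_⟩
  · have hC := fun t => mem_inter.1 (eC t).2
    have hA' := fun t => mem_sdiff.1 (eA t).2
    have hB' := fun t => mem_sdiff.1 (eB t).2
    refine (Subtype.val_injective.comp eC.injective).sumElim
      ((Subtype.val_injective.comp eA.injective).sumElim
        (Subtype.val_injective.comp eB.injective) fun t u h => (hB' u).2 (h ▸ (hA' t).1))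
      fun t u h => ?_
    rcases u with u | u <;> simp only [comp_apply, Sum.elim_inl, Sum.elim_inr] at h
    · exact (hA' u).2 (h ▸ (hC t).2)
    · exact (hB' u).2 (h ▸ (hC t).1)
  · rintro (t | t)
    · simpa [A] using (mem_inter.1 (eC t).2).1
    · simpa [A] using (mem_sdiff.1 (eA t).2).1
  · rintro (t | t)
    · simpa [B] using (mem_inter.1 (eC t).2).2
    · simpa [B] using (mem_sdiff.1 (eB t).2).1

section CrossMoment

variable {X0 X1 : Type*} [MeasurableSpace X0] [MeasurableSpace X1]
  (F0 : Measure X0) (F1 : Measure X1) {m0 m1 : ℕ} (h : (Fin m0 → X0) → (Fin m1 → X1) → ℝ)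
  {ι0 ι1 κ0 κ1 : Type*} [Fintype ι0] [Fintype ι1] [Fintype κ0] [Fintype κ1]

noncomputable def crossMoment (α0 β0 : Fin m0 → ι0) (α1 β1 : Fin m1 → ι1) : ℝ :=
  ∫ w, h (w.1 ∘ α0) (w.2 ∘ α1) * h (w.1 ∘ β0) (w.2 ∘ β1) ∂twoSampleLaw F0 F1 ι0 ι1

variable {h}

theorem crossMoment_comp_perm
    (hsymm0 : ∀ (e : Equiv.Perm (Fin m0)) x y, h (x ∘ e) y = h x y)
    (hsymm1 : ∀ (e : Equiv.Perm (Fin m1)) x y, h x (y ∘ e) = h x y)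
    (α0 β0 : Fin m0 → ι0) (α1 β1 : Fin m1 → ι1) (π0 ρ0 : Equiv.Perm (Fin m0))
    (π1 ρ1 : Equiv.Perm (Fin m1)) :
    crossMoment F0 F1 h (α0 ∘ π0) (β0 ∘ ρ0) (α1 ∘ π1) (β1 ∘ ρ1) =
      crossMoment F0 F1 h α0 β0 α1 β1 := by
  unfold crossMoment
  congr with w
  rw [← comp_assoc, ← comp_assoc, hsymm0, hsymm1, ← comp_assoc, ← comp_assoc, hsymm0, hsymm1]

variable [IsProbabilityMeasure F0] [IsProbabilityMeasure F1]

theorem memLp_twoSampleLaw_comp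
    (hL2 : MemLp (fun p => h p.1 p.2) 2 (twoSampleLaw F0 F1 (Fin m0) (Fin m1)))
    {α0 : Fin m0 → ι0} {α1 : Fin m1 → ι1} (hα0 : Injective α0) (hα1 : Injective α1) :
    MemLp (fun w => h (w.1 ∘ α0) (w.2 ∘ α1)) 2 (twoSampleLaw F0 F1 ι0 ι1) :=
  hL2.comp_measurePreserving (measurePreserving_twoSampleLaw_comp F0 F1 hα0 hα1)

theorem integrable_crossMoment_integrand
    (hL2 : MemLp (fun p => h p.1 p.2) 2 (twoSampleLaw F0 F1 (Fin m0) (Fin m1)))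
    {α0 β0 : Fin m0 → ι0} {α1 β1 : Fin m1 → ι1} (hα0 : Injective α0) (hβ0 : Injective β0)
    (hα1 : Injective α1) (hβ1 : Injective β1) :
    Integrable (fun w => h (w.1 ∘ α0) (w.2 ∘ α1) * h (w.1 ∘ β0) (w.2 ∘ β1))
      (twoSampleLaw F0 F1 ι0 ι1) :=
  (memLp_twoSampleLaw_comp F0 F1 hL2 hα0 hα1).integrable_mul
    (memLp_twoSampleLaw_comp F0 F1 hL2 hβ0 hβ1)

theorem crossMoment_comp_injective
    (hL2 : MemLp (fun p => h p.1 p.2) 2 (twoSampleLaw F0 F1 (Fin m0) (Fin m1)))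
    {α0 β0 : Fin m0 → κ0} {α1 β1 : Fin m1 → κ1} (hα0 : Injective α0) (hβ0 : Injective β0)
    (hα1 : Injective α1) (hβ1 : Injective β1) {j0 : κ0 → ι0} {j1 : κ1 → ι1}
    (hj0 : Injective j0) (hj1 : Injective j1) :
    crossMoment F0 F1 h (j0 ∘ α0) (j0 ∘ β0) (j1 ∘ α1) (j1 ∘ β1) =
      crossMoment F0 F1 h α0 β0 α1 β1 :=
  integral_twoSampleLaw_comp F0 F1 hj0 hj1
    (integrable_crossMoment_integrand F0 F1 hL2 hα0 hβ0 hα1 hβ1).aestronglyMeasurable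

/-- In the canonical configuration the two tuples share the block `Fin r` and have disjoint
private blocks `Fin (m - r)`. -/
theorem crossMoment_eq_canonical [DecidableEq ι0] [DecidableEq ι1]
    (hL2 : MemLp (fun p => h p.1 p.2) 2 (twoSampleLaw F0 F1 (Fin m0) (Fin m1)))
    (hsymm0 : ∀ (e : Equiv.Perm (Fin m0)) x y, h (x ∘ e) y = h x y)
    (hsymm1 : ∀ (e : Equiv.Perm (Fin m1)) x y, h x (y ∘ e) = h x y)
    {r s : ℕ} {α0 β0 : Fin m0 → ι0} {α1 β1 : Fin m1 → ι1}
    (hα0 : Injective α0) (hβ0 : Injective β0) (hα1 : Injective α1) (hβ1 : Injective β1)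
    (hr : #(univ.image α0 ∩ univ.image β0) = r) (hs : #(univ.image α1 ∩ univ.image β1) = s)
    (e0 : Fin m0 ≃ Fin r ⊕ Fin (m0 - r)) (e1 : Fin m1 ≃ Fin s ⊕ Fin (m1 - s)) :
    crossMoment F0 F1 h α0 β0 α1 β1 =
      crossMoment F0 F1 h (Sum.map id Sum.inl ∘ e0) (Sum.map id Sum.inr ∘ e0)
        (Sum.map id Sum.inl ∘ e1) (Sum.map id Sum.inr ∘ e1) := by
  have hα0' : Injective (Sum.map id (Sum.inl (β := Fin (m0 - r))) ∘ e0) :=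
    (Sum.map_injective.2 ⟨injective_id, Sum.inl_injective⟩).comp e0.injective
  have hβ0' : Injective (Sum.map id (Sum.inr (α := Fin (m0 - r))) ∘ e0) :=
    (Sum.map_injective.2 ⟨injective_id, Sum.inr_injective⟩).comp e0.injective
  have hα1' : Injective (Sum.map id (Sum.inl (β := Fin (m1 - s))) ∘ e1) :=
    (Sum.map_injective.2 ⟨injective_id, Sum.inl_injective⟩).comp e1.injective
  have hβ1' : Injective (Sum.map id (Sum.inr (α := Fin (m1 - s))) ∘ e1) :=
    (Sum.map_injective.2 ⟨injective_id, Sum.inr_injective⟩).comp e1.injective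
  obtain ⟨j0, hj0, hα0j, hβ0j⟩ := exists_injective_of_card_image_inter hα0 hβ0 hr
  obtain ⟨j1, hj1, hα1j, hβ1j⟩ := exists_injective_of_card_image_inter hα1 hβ1 hs
  obtain ⟨π0, hπ0⟩ := exists_perm_comp_eq (hj0.comp hα0') fun k => hα0j (e0 k)
  obtain ⟨ρ0, hρ0⟩ := exists_perm_comp_eq (hj0.comp hβ0') fun k => hβ0j (e0 k)
  obtain ⟨π1, hπ1⟩ := exists_perm_comp_eq (hj1.comp hα1') fun k => hα1j (e1 k)
  obtain ⟨ρ1, hρ1⟩ := exists_perm_comp_eq (hj1.comp hβ1') fun k => hβ1j (e1 k)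
  rw [← crossMoment_comp_perm F0 F1 hsymm0 hsymm1 α0 β0 α1 β1 π0 ρ0 π1 ρ1, hπ0, hρ0, hπ1, hρ1]
  exact crossMoment_comp_injective F0 F1 hL2 hα0' hβ0' hα1' hβ1' hj0 hj1

theorem crossMoment_eq_of_card_image_inter_eq [DecidableEq ι0] [DecidableEq ι1]
    [DecidableEq κ0] [DecidableEq κ1]
    (hL2 : MemLp (fun p => h p.1 p.2) 2 (twoSampleLaw F0 F1 (Fin m0) (Fin m1)))
    (hsymm0 : ∀ (e : Equiv.Perm (Fin m0)) x y, h (x ∘ e) y = h x y)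
    (hsymm1 : ∀ (e : Equiv.Perm (Fin m1)) x y, h x (y ∘ e) = h x y)
    {r s : ℕ} {α0 β0 : Fin m0 → ι0} {α1 β1 : Fin m1 → ι1}
    (hα0 : Injective α0) (hβ0 : Injective β0) (hα1 : Injective α1) (hβ1 : Injective β1)
    (hr : #(univ.image α0 ∩ univ.image β0) = r) (hs : #(univ.image α1 ∩ univ.image β1) = s)
    {γ0 δ0 : Fin m0 → κ0} {γ1 δ1 : Fin m1 → κ1}
    (hγ0 : Injective γ0) (hδ0 : Injective δ0) (hγ1 : Injective γ1) (hδ1 : Injective δ1)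
    (hr' : #(univ.image γ0 ∩ univ.image δ0) = r) (hs' : #(univ.image γ1 ∩ univ.image δ1) = s) :
    crossMoment F0 F1 h α0 β0 α1 β1 = crossMoment F0 F1 h γ0 δ0 γ1 δ1 := by
  have hrm : r ≤ m0 := hr ▸ (card_le_card inter_subset_left).trans card_image_le |>.trans (by simp)
  have hsm : s ≤ m1 := hs ▸ (card_le_card inter_subset_left).trans card_image_le |>.trans (by simp)
  let e0 : Fin m0 ≃ Fin r ⊕ Fin (m0 - r) := Fintype.equivOfCardEq (by simp; omega)
  let e1 : Fin m1 ≃ Fin s ⊕ Fin (m1 - s) := Fintype.equivOfCardEq (by simp; omega)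
  rw [crossMoment_eq_canonical F0 F1 hL2 hsymm0 hsymm1 hα0 hβ0 hα1 hβ1 hr hs e0 e1,
    crossMoment_eq_canonical F0 F1 hL2 hsymm0 hsymm1 hγ0 hδ0 hγ1 hδ1 hr' hs' e0 e1]

end CrossMoment

def headOrTail (a m : ℕ) (i : Fin m) : Fin a ⊕ Fin m :=
  if hi : (i : ℕ) < a then .inl ⟨i, hi⟩ else .inr i

theorem headOrTail_injective (a m : ℕ) : Injective (headOrTail a m) := by
  intro i i' hii'
  unfold headOrTail at hii'
  split_ifs at hii' <;> simp_all [Fin.ext_iff]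

theorem injective_sumMap_comp_headOrTail {a m : ℕ} {β γ : Type*} {f : Fin a → β}
    {g : Fin m → γ} (hf : Injective f) (hg : Injective g) :
    Injective (Sum.map f g ∘ headOrTail a m) :=
  (Sum.map_injective.2 ⟨hf, hg⟩).comp (headOrTail_injective a m)

theorem headOrTail_castLE {a m : ℕ} (ha : a ≤ m) (t : Fin a) :
    headOrTail a m (Fin.castLE ha t) = .inl t := by
  simp [headOrTail]

theorem exists_map_headOrTail_eq_inl {a m : ℕ} {β γ : Type*} (ha : a ≤ m) (f : Fin a → β)
    (g : Fin m → γ) (x : β) :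
    (∃ i, Sum.map f g (headOrTail a m i) = .inl x) ↔ ∃ t, f t = x := by
  refine ⟨fun ⟨i, hi⟩ => ?_, fun ⟨t, ht⟩ => ⟨Fin.castLE ha t, by simp [headOrTail_castLE, ht]⟩⟩
  rcases hh : headOrTail a m i with t | j
  · exact ⟨t, by simpa [hh] using hi⟩
  · simp [hh] at hi

theorem card_image_inter_map_headOrTail {a m : ℕ} {ι : Type*} [DecidableEq ι] (ha : a ≤ m)
    (σ : Fin a → ι) (τ : Fin m → ι) :
    #(univ.image (Sum.map σ id ∘ headOrTail a m) ∩ univ.image (Sum.inl ∘ τ)) =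
      #(univ.image σ ∩ univ.image τ) := by
  suffices univ.image (Sum.map σ id ∘ headOrTail a m) ∩ univ.image (Sum.inl ∘ τ) =
      (univ.image σ ∩ univ.image τ).map Embedding.inl by rw [this, card_map]
  ext (x | i)
  · simp [exists_map_headOrTail_eq_inl ha]
  · simp

theorem card_image_inter_headOrTail_inl_inr {r m : ℕ} (hr : r ≤ m) :
    #(univ.image (Sum.map id Sum.inl ∘ headOrTail r m) ∩
      univ.image (Sum.map id Sum.inr ∘ headOrTail r m)) = r := by
  suffices univ.image (Sum.map id Sum.inl ∘ headOrTail r m) ∩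
      univ.image (Sum.map id Sum.inr ∘ headOrTail r m) = univ.map Embedding.inl by
    rw [this, card_map, card_univ, Fintype.card_fin]
  ext (t | i | i)
  · simp [exists_map_headOrTail_eq_inl hr]
  all_goals
    simp only [mem_inter, mem_image, mem_map, mem_univ, true_and, comp_apply, Embedding.inl_apply,
      reduceCtorEq, exists_false, iff_false, not_and, forall_exists_index]
    rintro k hk ⟨k', hk'⟩
    cases hx : headOrTail r m k <;> cases hy : headOrTail r m k' <;> simp_all

section Projection

variable (F0 F1 : Measure ℝ) {m0 m1 : ℕ} {h : (Fin m0 → ℝ) → (Fin m1 → ℝ) → ℝ}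

theorem proj_eq_integral_headOrTail (a b : ℕ) (u : Fin a → ℝ) (v : Fin b → ℝ) :
    proj F0 F1 h a b u v =
      ∫ p, h (Sum.elim u p.1 ∘ headOrTail a m0) (Sum.elim v p.2 ∘ headOrTail b m1)
        ∂twoSampleLaw F0 F1 (Fin m0) (Fin m1) := by
  unfold proj headOrTail
  congr with p
  congr <;> ext i <;> simp only [comp_apply] <;> split_ifs <;> rfl

variable [IsProbabilityMeasure F0] [IsProbabilityMeasure F1]

theorem integral_proj
    (hint : Integrable (fun p => h p.1 p.2) (twoSampleLaw F0 F1 (Fin m0) (Fin m1))) (a b : ℕ) :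
    ∫ q, proj F0 F1 h a b q.1 q.2 ∂twoSampleLaw F0 F1 (Fin a) (Fin b) =
      ∫ p, h p.1 p.2 ∂twoSampleLaw F0 F1 (Fin m0) (Fin m1) := by
  have hcomp := measurePreserving_twoSampleLaw_comp F0 F1 (headOrTail_injective a m0)
    (headOrTail_injective b m1)
  simp_rw [proj_eq_integral_headOrTail]
  exact (integral_integral_twoSampleMerge F0 F1 (hcomp.integrable_comp_of_integrable hint)).trans
    (integral_twoSampleLaw_comp F0 F1 (headOrTail_injective a m0) (headOrTail_injective b m1)
      hint.aestronglyMeasurable)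

theorem integral_proj_sq
    (hL2 : MemLp (fun p => h p.1 p.2) 2 (twoSampleLaw F0 F1 (Fin m0) (Fin m1))) (a b : ℕ) :
    ∫ q, proj F0 F1 h a b q.1 q.2 ^ 2 ∂twoSampleLaw F0 F1 (Fin a) (Fin b) =
      crossMoment F0 F1 h (Sum.map id Sum.inl ∘ headOrTail a m0)
        (Sum.map id Sum.inr ∘ headOrTail a m0) (Sum.map id Sum.inl ∘ headOrTail b m1)
        (Sum.map id Sum.inr ∘ headOrTail b m1) := by
  have hsq : ∀ q : (Fin a → ℝ) × (Fin b → ℝ), proj F0 F1 h a b q.1 q.2 ^ 2 =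
      ∫ v, h (Sum.elim q.1 v.1 ∘ (Sum.map id Sum.inl ∘ headOrTail a m0))
          (Sum.elim q.2 v.2 ∘ (Sum.map id Sum.inl ∘ headOrTail b m1)) *
        h (Sum.elim q.1 v.1 ∘ (Sum.map id Sum.inr ∘ headOrTail a m0))
          (Sum.elim q.2 v.2 ∘ (Sum.map id Sum.inr ∘ headOrTail b m1))
        ∂twoSampleLaw F0 F1 (Fin m0 ⊕ Fin m0) (Fin m1 ⊕ Fin m1) := by
    intro q
    rw [proj_eq_integral_headOrTail, sq_integral_twoSampleLaw]
    simp only [← comp_assoc, Sum.elim_comp_map, comp_id]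
  simp_rw [hsq]
  exact integral_integral_twoSampleMerge F0 F1 (integrable_crossMoment_integrand F0 F1 hL2
    (injective_sumMap_comp_headOrTail injective_id Sum.inl_injective)
    (injective_sumMap_comp_headOrTail injective_id Sum.inr_injective)
    (injective_sumMap_comp_headOrTail injective_id Sum.inl_injective)
    (injective_sumMap_comp_headOrTail injective_id Sum.inr_injective))

theorem integral_proj_comp_mul_comp
    (hL2 : MemLp (fun p => h p.1 p.2) 2 (twoSampleLaw F0 F1 (Fin m0) (Fin m1)))
    {ι0 ι1 : Type*} [Fintype ι0] [Fintype ι1] {a b : ℕ} {σ0 : Fin a → ι0} {τ0 : Fin m0 → ι0}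
    {σ1 : Fin b → ι1} {τ1 : Fin m1 → ι1} (hσ0 : Injective σ0) (hτ0 : Injective τ0)
    (hσ1 : Injective σ1) (hτ1 : Injective τ1) :
    ∫ w, proj F0 F1 h a b (w.1 ∘ σ0) (w.2 ∘ σ1) * h (w.1 ∘ τ0) (w.2 ∘ τ1)
        ∂twoSampleLaw F0 F1 ι0 ι1 =
      crossMoment F0 F1 h (Sum.map σ0 id ∘ headOrTail a m0) (Sum.inl ∘ τ0)
        (Sum.map σ1 id ∘ headOrTail b m1) (Sum.inl ∘ τ1) := by
  have hpt : ∀ w : (ι0 → ℝ) × (ι1 → ℝ),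
      proj F0 F1 h a b (w.1 ∘ σ0) (w.2 ∘ σ1) * h (w.1 ∘ τ0) (w.2 ∘ τ1) =
        ∫ p, h (Sum.elim w.1 p.1 ∘ (Sum.map σ0 id ∘ headOrTail a m0))
            (Sum.elim w.2 p.2 ∘ (Sum.map σ1 id ∘ headOrTail b m1)) *
          h (Sum.elim w.1 p.1 ∘ (Sum.inl ∘ τ0)) (Sum.elim w.2 p.2 ∘ (Sum.inl ∘ τ1))
          ∂twoSampleLaw F0 F1 (Fin m0) (Fin m1) := by
    intro w
    rw [proj_eq_integral_headOrTail, ← integral_mul_const]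
    simp only [← comp_assoc, Sum.elim_comp_map, Sum.elim_comp_inl, comp_id]
  simp_rw [hpt]
  exact integral_integral_twoSampleMerge F0 F1 (integrable_crossMoment_integrand F0 F1 hL2
    (injective_sumMap_comp_headOrTail hσ0 injective_id) (Sum.inl_injective.comp hτ0)
    (injective_sumMap_comp_headOrTail hσ1 injective_id) (Sum.inl_injective.comp hτ1))

theorem xi_eq_crossMoment
    (hL2 : MemLp (fun p => h p.1 p.2) 2 (twoSampleLaw F0 F1 (Fin m0) (Fin m1)))
    (hZero : ∫ p, h p.1 p.2 ∂twoSampleLaw F0 F1 (Fin m0) (Fin m1) = 0) (a b : ℕ) :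
    xi F0 F1 h a b =
      crossMoment F0 F1 h (Sum.map id Sum.inl ∘ headOrTail a m0)
        (Sum.map id Sum.inr ∘ headOrTail a m0) (Sum.map id Sum.inl ∘ headOrTail b m1)
        (Sum.map id Sum.inr ∘ headOrTail b m1) := by
  have hmean := (integral_proj F0 F1 (hL2.integrable one_le_two) a b).trans hZero
  have hsq := integral_proj_sq F0 F1 hL2 a b
  unfold twoSampleLaw at hmean hsq
  rw [xi, hmean, hsq]
  ring

end Projection

theorem projection_kernel_product_expectation_eq_xi_general
    {m0 m1 n0 n1 : ℕ} (F0 F1 : Measure ℝ) [IsProbabilityMeasure F0] [IsProbabilityMeasure F1]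
    (h : (Fin m0 → ℝ) → (Fin m1 → ℝ) → ℝ)
    (hL2 : MemLp (fun p : (Fin m0 → ℝ) × (Fin m1 → ℝ) => h p.1 p.2) 2
      ((Measure.pi fun _ : Fin m0 => F0).prod (Measure.pi fun _ : Fin m1 => F1)))
    (hZero : ∫ p : (Fin m0 → ℝ) × (Fin m1 → ℝ), h p.1 p.2
      ∂((Measure.pi fun _ : Fin m0 => F0).prod (Measure.pi fun _ : Fin m1 => F1)) = 0)
    (hsymm0 : ∀ (e : Equiv.Perm (Fin m0)) (x : Fin m0 → ℝ) (y : Fin m1 → ℝ),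
      h (x ∘ e) y = h x y)
    (hsymm1 : ∀ (e : Equiv.Perm (Fin m1)) (x : Fin m0 → ℝ) (y : Fin m1 → ℝ),
      h x (y ∘ e) = h x y)
    (a b r s : ℕ) (ha : a ≤ m0) (hb : b ≤ m1) (hra : r ≤ a) (hsb : s ≤ b)
    (σ0 : Fin a → Fin n0) (τ0 : Fin m0 → Fin n0)
    (hσ0 : Function.Injective σ0) (hτ0 : Function.Injective τ0)
    (hr : ((Finset.univ.image σ0) ∩ (Finset.univ.image τ0)).card = r)
    (σ1 : Fin b → Fin n1) (τ1 : Fin m1 → Fin n1)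
    (hσ1 : Function.Injective σ1) (hτ1 : Function.Injective τ1)
    (hs : ((Finset.univ.image σ1) ∩ (Finset.univ.image τ1)).card = s) :
    ∫ w : (Fin n0 → ℝ) × (Fin n1 → ℝ),
        (proj F0 F1 h a b (fun i => w.1 (σ0 i)) (fun j => w.2 (σ1 j))) *
        (h (fun i => w.1 (τ0 i)) (fun j => w.2 (τ1 j)))
      ∂((Measure.pi fun _ : Fin n0 => F0).prod (Measure.pi fun _ : Fin n1 => F1)) =
      xi F0 F1 h r s := by
  calc _ = crossMoment F0 F1 h (Sum.map σ0 id ∘ headOrTail a m0) (Sum.inl ∘ τ0)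
        (Sum.map σ1 id ∘ headOrTail b m1) (Sum.inl ∘ τ1) :=
      integral_proj_comp_mul_comp F0 F1 hL2 hσ0 hτ0 hσ1 hτ1
    _ = crossMoment F0 F1 h (Sum.map id Sum.inl ∘ headOrTail r m0)
        (Sum.map id Sum.inr ∘ headOrTail r m0) (Sum.map id Sum.inl ∘ headOrTail s m1)
        (Sum.map id Sum.inr ∘ headOrTail s m1) :=
      crossMoment_eq_of_card_image_inter_eq F0 F1 hL2 hsymm0 hsymm1
        (injective_sumMap_comp_headOrTail hσ0 injective_id) (Sum.inl_injective.comp hτ0)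
        (injective_sumMap_comp_headOrTail hσ1 injective_id) (Sum.inl_injective.comp hτ1)
        ((card_image_inter_map_headOrTail ha σ0 τ0).trans hr)
        ((card_image_inter_map_headOrTail hb σ1 τ1).trans hs)
        (injective_sumMap_comp_headOrTail injective_id Sum.inl_injective)
        (injective_sumMap_comp_headOrTail injective_id Sum.inr_injective)
        (injective_sumMap_comp_headOrTail injective_id Sum.inl_injective)
        (injective_sumMap_comp_headOrTail injective_id Sum.inr_injective)
        (card_image_inter_headOrTail_inl_inr (hra.trans ha))
        (card_image_inter_headOrTail_inl_inr (hsb.trans hb))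
    _ = xi F0 F1 h r s := (xi_eq_crossMoment F0 F1 hL2 hZero r s).symm

/-- if a projection `h_{a,b}` and the full kernel `h` are evaluated at argument
tuples sharing exactly `r` common first-sample observations and `s` common second-sample
observations, then `E[h_{a,b}(...) · h(...)] = ξ_{r,s} = Var(h_{r,s})`. -/
theorem projection_kernel_product_expectation_eq_xi
    {m0 m1 n0 n1 : ℕ} (F0 F1 : Measure ℝ) [IsProbabilityMeasure F0] [IsProbabilityMeasure F1]
    (h : (Fin m0 → ℝ) → (Fin m1 → ℝ) → ℝ)
    (hMeas : Measurable (fun p : (Fin m0 → ℝ) × (Fin m1 → ℝ) => h p.1 p.2))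
    (hL2 : MemLp (fun p : (Fin m0 → ℝ) × (Fin m1 → ℝ) => h p.1 p.2) 2
      ((Measure.pi fun _ : Fin m0 => F0).prod (Measure.pi fun _ : Fin m1 => F1)))
    (hZero : ∫ p : (Fin m0 → ℝ) × (Fin m1 → ℝ), h p.1 p.2
      ∂((Measure.pi fun _ : Fin m0 => F0).prod (Measure.pi fun _ : Fin m1 => F1)) = 0)
    (hsymm0 : ∀ (e : Equiv.Perm (Fin m0)) (x : Fin m0 → ℝ) (y : Fin m1 → ℝ),
      h (x ∘ e) y = h x y)
    (hsymm1 : ∀ (e : Equiv.Perm (Fin m1)) (x : Fin m0 → ℝ) (y : Fin m1 → ℝ),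
      h x (y ∘ e) = h x y)
    (a b r s : ℕ) (ha : a ≤ m0) (hb : b ≤ m1) (hra : r ≤ a) (hsb : s ≤ b)
    (σ0 : Fin a → Fin n0) (τ0 : Fin m0 → Fin n0)
    (hσ0 : Function.Injective σ0) (hτ0 : Function.Injective τ0)
    (hr : ((Finset.univ.image σ0) ∩ (Finset.univ.image τ0)).card = r)
    (σ1 : Fin b → Fin n1) (τ1 : Fin m1 → Fin n1)
    (hσ1 : Function.Injective σ1) (hτ1 : Function.Injective τ1)
    (hs : ((Finset.univ.image σ1) ∩ (Finset.univ.image τ1)).card = s) :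
    ∫ w : (Fin n0 → ℝ) × (Fin n1 → ℝ),
        (proj F0 F1 h a b (fun i => w.1 (σ0 i)) (fun j => w.2 (σ1 j))) *
        (h (fun i => w.1 (τ0 i)) (fun j => w.2 (τ1 j)))
      ∂((Measure.pi fun _ : Fin n0 => F0).prod (Measure.pi fun _ : Fin n1 => F1)) =
      xi F0 F1 h r s :=
  projection_kernel_product_expectation_eq_xi_general F0 F1 h hL2 hZero hsymm0 hsymm1 a b r s ha hb
    hra hsb σ0 τ0 hσ0 hτ0 hr σ1 τ1 hσ1 hτ1 hs
end

section
/- For the imbalanced Kendall kernel with i.i.d. N(0,1) arguments, the projection onto one control observation is h_{1,0}(x) = E[sgn(X^{(1)} − (x + Σ_{k=2}^m X_k^{(0)})/m)] and its variance equals ξ_{1,0} = ∫_ℝ (1 − 2Φ((m^2 + m − 1)^{-1/2} x))^2 φ(x) dx. -/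
/-!
Given the control observation `x`, the variable `X¹ - (x + Σ_{k≥2} X_k⁰)/m` is Gaussian with mean
`-x/m` and variance `1 + (m - 1)/m² = (m² + m - 1)/m²`, so the projection is
`h(x) = E sgn(N(-x/m, ·)) = 1 - 2Φ(x/√(m² + m - 1))`. Since `h` is odd and the standard Gaussian
is symmetric, `E h(X) = 0`, and the variance is the second moment `∫ h² φ`.
-/

open MeasureTheory ProbabilityTheory
open Set
open scoped NNReal

lemma Real.measurable_sign : Measurable Real.sign := by
  unfold Real.sign
  exact .ite measurableSet_Iio measurable_const
    (.ite measurableSet_Ioi measurable_const measurable_const)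

lemma integral_sign_eq_one_sub_two_mul_cdf (μ : Measure ℝ) [IsProbabilityMeasure μ]
    [NullSingletonClass μ] :
    ∫ y, Real.sign y ∂μ = 1 - 2 * cdf μ 0 := by
  have hsign : (fun y ↦ Real.sign y) =ᵐ[μ] fun y ↦ 1 - 2 * (Iic 0).indicator 1 y := by
    filter_upwards [Measure.ae_ne μ 0] with y hy
    rcases hy.lt_or_gt with hneg | hpos
    · simp [Real.sign_of_neg hneg, hneg.le]
      norm_num
    · simp [Real.sign_of_pos hpos, hpos.not_ge]
  rw [integral_congr_ae hsign, integral_sub (integrable_const _)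
    (((integrable_const _).indicator measurableSet_Iic).const_mul _), integral_const_mul,
    integral_indicator_one measurableSet_Iic, cdf_eq_real]
  simp

lemma cdf_map_mul_add (μ : Measure ℝ) [IsProbabilityMeasure μ] {a : ℝ} (ha : 0 < a) (b t : ℝ) :
    cdf (μ.map fun y ↦ a * y + b) t = cdf μ ((t - b) / a) := by
  have hpre : (fun y ↦ a * y + b) ⁻¹' Iic t = Iic ((t - b) / a) := by
    ext y
    simp only [mem_preimage, mem_Iic, le_div_iff₀ ha]
    constructor <;> intro h <;> linarith
  have := Measure.isProbabilityMeasure_map (μ := μ) (f := fun y ↦ a * y + b) (by fun_prop)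
  rw [cdf_eq_real, cdf_eq_real, map_measureReal_apply (by fun_prop) measurableSet_Iic, hpre]

lemma Function.Odd.integral_eq_zero {G E : Type*} [AddGroup G] [MeasurableSpace G]
    [MeasurableNeg G] [NormedAddCommGroup E] [NormedSpace ℝ E] {f : G → E} (hf : f.Odd)
    (μ : Measure G) [μ.IsNegInvariant] :
    ∫ x, f x ∂μ = 0 := by
  have h := integral_neg_eq_self f μ
  simp only [show ∀ x, f (-x) = -f x from hf, integral_neg] at h
  rw [neg_eq_iff_add_eq_zero, ← two_smul ℝ] at h
  exact (smul_eq_zero.mp h).resolve_left two_ne_zero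

lemma map_add_comp_snd_prod_eq_conv {M α : Type*} [AddMonoid M] [MeasurableSpace M]
    [MeasurableAdd₂ M] [MeasurableSpace α] (μ : Measure M) (ν : Measure α) [SFinite μ] [SFinite ν]
    {f : α → M} (hf : Measurable f) :
    (μ.prod ν).map (fun p ↦ p.1 + f p.2) = μ ∗ ν.map f := by
  rw [Measure.conv, ← Measure.map_id (μ := μ), Measure.map_prod_map _ _ measurable_id hf,
    Measure.map_map (by fun_prop) (measurable_id.prodMap hf), Measure.map_id]
  rfl

lemma gaussianReal_eq_map_mul_add (c : ℝ) (v : ℝ≥0) :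
    gaussianReal c v = (gaussianReal 0 1).map fun y ↦ √v * y + c := by
  rw [show (fun y ↦ √v * y + c) = (· + c) ∘ (√v * ·) from rfl,
    ← Measure.map_map (by fun_prop) (by fun_prop),
    gaussianReal_map_const_mul, gaussianReal_map_add_const]
  congr
  · ring
  · ext; simp

lemma cdf_gaussianReal {v : ℝ≥0} (hv : v ≠ 0) (c t : ℝ) :
    cdf (gaussianReal c v) t = cdf (gaussianReal 0 1) ((t - c) / √v) := by
  rw [gaussianReal_eq_map_mul_add, cdf_map_mul_add _ (by positivity)]

section

variable {v : ℝ≥0}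

instance isNegInvariant_gaussianReal : (gaussianReal 0 v).IsNegInvariant :=
  ⟨gaussianReal_map_neg.trans (by rw [neg_zero])⟩

lemma integral_sign_gaussianReal (hv : v ≠ 0) (c : ℝ) :
    ∫ y, Real.sign y ∂gaussianReal c v = 1 - 2 * cdf (gaussianReal 0 1) (-c / √v) := by
  have : NullSingletonClass (gaussianReal c v) :=
    ⟨fun y ↦ gaussianReal_absolutelyContinuous c hv (measure_singleton y)⟩
  rw [integral_sign_eq_one_sub_two_mul_cdf, cdf_gaussianReal hv, zero_sub]

lemma integral_sign_gaussianReal_neg (c : ℝ) :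
    ∫ y, Real.sign y ∂gaussianReal (-c) v = -∫ y, Real.sign y ∂gaussianReal c v := by
  rw [← gaussianReal_map_neg, integral_map (by fun_prop)
    Real.measurable_sign.aestronglyMeasurable, ← integral_neg]
  simp_rw [Real.sign_neg]

end

lemma map_sum_pi_gaussianReal {ι : Type*} [Fintype ι] (μ : ι → ℝ) (v : ι → ℝ≥0) :
    (Measure.pi fun i ↦ gaussianReal (μ i) (v i)).map (fun p ↦ ∑ i, p i) =
      gaussianReal (∑ i, μ i) (∑ i, v i) := by
  refine Measure.ext_of_charFun (funext fun t ↦ ?_)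
  simp only [charFun_map_sum_pi_eq_prod, Finset.prod_apply, charFun_gaussianReal,
    ← Complex.exp_sum]
  congr 1
  push_cast
  simp only [Finset.sum_sub_distrib, ← Finset.sum_mul, ← Finset.mul_sum, ← Finset.sum_div]

lemma map_sub_div_prod_pi_gaussianReal {ι : Type*} [Fintype ι] (a x : ℝ) {v : ℝ≥0}
    (hv : (v : ℝ) = 1 + Fintype.card ι / a ^ 2) :
    ((gaussianReal 0 1).prod (Measure.pi fun _ : ι ↦ gaussianReal 0 1)).map
      (fun p ↦ p.1 - (x + ∑ k, p.2 k) / a) = gaussianReal (-x / a) v := by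
  set f : (ι → ℝ) → ℝ := (· + -x / a) ∘ (-a⁻¹ * ·) ∘ (fun w ↦ ∑ k, w k)
  rw [show (fun p : ℝ × (ι → ℝ) ↦ p.1 - (x + ∑ k, p.2 k) / a) = fun p ↦ p.1 + f p.2 by
      ext; simp only [f, Function.comp_apply]; ring,
    map_add_comp_snd_prod_eq_conv _ _ (by fun_prop),
    ← Measure.map_map (by fun_prop) (by fun_prop), ← Measure.map_map (by fun_prop) (by fun_prop),
    map_sum_pi_gaussianReal,
    gaussianReal_map_const_mul, gaussianReal_map_add_const, gaussianReal_conv_gaussianReal]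
  congr 1
  · simp
  · ext
    simp [hv, div_eq_mul_inv, mul_comm]

/-- for the imbalanced Kendall kernel with i.i.d. `N(0,1)` arguments, the
projection onto one control observation,
`h_{1,0}(x) = E[sgn(X¹ - (x + Σ_{k=2}^m X_k⁰)/m)]`, has variance
`ξ_{1,0} = ∫ (1 - 2Φ((m² + m - 1)^{-1/2} x))² φ(x) dx`. -/
theorem imbalanced_kendall_xi10
    (m : ℕ) (hm : 0 < m) :
    (∫ x, (∫ p : ℝ × (Fin (m - 1) → ℝ),
          Real.sign (p.1 - (x + ∑ k, p.2 k) / m)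
        ∂((gaussianReal 0 1).prod (Measure.pi fun _ : Fin (m - 1) => gaussianReal 0 1))) ^ 2
        ∂(gaussianReal 0 1)) -
    (∫ x, (∫ p : ℝ × (Fin (m - 1) → ℝ),
          Real.sign (p.1 - (x + ∑ k, p.2 k) / m)
        ∂((gaussianReal 0 1).prod (Measure.pi fun _ : Fin (m - 1) => gaussianReal 0 1)))
        ∂(gaussianReal 0 1)) ^ 2 =
    ∫ x : ℝ, (1 - 2 * cdf (gaussianReal 0 1)
        ((Real.sqrt ((m : ℝ) ^ 2 + m - 1))⁻¹ * x)) ^ 2 * gaussianPDFReal 0 1 x := by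
  have hm0 : (0 : ℝ) < m := Nat.cast_pos.mpr hm
  have hpos : (0 : ℝ) < (m : ℝ) ^ 2 + m - 1 := by nlinarith [(Nat.one_le_cast (α := ℝ)).mpr hm]
  set v : ℝ≥0 := (((m : ℝ) ^ 2 + m - 1) / (m : ℝ) ^ 2).toNNReal
  have hv : (v : ℝ) = 1 + Fintype.card (Fin (m - 1)) / (m : ℝ) ^ 2 := by
    rw [Real.coe_toNNReal _ (by positivity), Fintype.card_fin, Nat.cast_sub hm, Nat.cast_one]
    field_simp
    ring
  have hv0 : v ≠ 0 := by
    rw [← NNReal.coe_ne_zero, hv]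
    positivity
  have h_inner (x : ℝ) :
      ∫ p : ℝ × (Fin (m - 1) → ℝ), Real.sign (p.1 - (x + ∑ k, p.2 k) / m)
        ∂((gaussianReal 0 1).prod (Measure.pi fun _ : Fin (m - 1) => gaussianReal 0 1)) =
      ∫ y, Real.sign y ∂gaussianReal (-x / m) v := by
    rw [← map_sub_div_prod_pi_gaussianReal _ x hv,
      integral_map (by fun_prop) Real.measurable_sign.aestronglyMeasurable]
  have h_odd : Function.Odd fun x : ℝ ↦ ∫ y, Real.sign y ∂gaussianReal (-x / m) v := fun x ↦ by
    simp only [neg_div, neg_neg, integral_sign_gaussianReal_neg]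
  have h_scale (x : ℝ) : -(-x / m) / √v = (√((m : ℝ) ^ 2 + m - 1))⁻¹ * x := by
    rw [Real.coe_toNNReal _ (by positivity), Real.sqrt_div hpos.le, Real.sqrt_sq hm0.le]
    field_simp
  simp only [h_inner]
  rw [h_odd.integral_eq_zero, integral_gaussianReal_eq_integral_smul one_ne_zero]
  simp only [integral_sign_gaussianReal hv0, h_scale, smul_eq_mul,
    mul_comm (gaussianPDFReal 0 1 _)]
  ring
end

section
/- Let X_1,...,X_n ∈ ℝ^p and Y_1,...,Y_n ∈ {0,1} with n_1 cases and n_0 controls. The empirical distance covariance dcov²(X,Y) = S_1 + S_2 − 2S_3 (with S_1 = n^{-2}ΣΣ ||X_i − X_j|| |Y_i − Y_j|, S_2 = n^{-2}ΣΣ||X_i − X_j|| · n^{-2}ΣΣ|Y_i − Y_j|, S_3 = n^{-3}ΣΣΣ ||X_i − X_l|| |Y_j − Y_l|) satisfies the identity dcov²(X,Y) = (n_0² n_1² / n^4) [ (4/(n_0 n_1)) Σ_{i∈cases} Σ_{j∈controls} ||X_i − X_j|| − (2/n_0²) Σ_{i,j∈controls} ||X_i − X_j|| − (2/n_1²) Σ_{i,j∈cases}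 ||X_i − X_j|| ]. -/
open Finset

/-- empirical distance covariance identity for binary labels. With
`S1, S2, S3` as in the definition of the empirical distance covariance,
`S1 + S2 - 2 S3` equals the rescaled two-group expression. -/
theorem dcov_identity
    (n p : ℕ) (X : Fin n → EuclideanSpace ℝ (Fin p)) (Y : Fin n → ℝ)
    (hY : ∀ i, Y i = 0 ∨ Y i = 1)
    (n1 : ℕ) (hn1 : n1 = (Finset.univ.filter (fun i => Y i = 1)).card)
    (n0 : ℕ) (hn0 : n0 = (Finset.univ.filter (fun i => Y i = 0)).card) :
    (((n : ℝ) ^ 2)⁻¹ * ∑ i : Fin n, ∑ j : Fin n, ‖X i - X j‖ * |Y i - Y j|) +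
    ((((n : ℝ) ^ 2)⁻¹ * ∑ i : Fin n, ∑ j : Fin n, ‖X i - X j‖) *
      (((n : ℝ) ^ 2)⁻¹ * ∑ i : Fin n, ∑ j : Fin n, |Y i - Y j|)) -
    2 * (((n : ℝ) ^ 3)⁻¹ *
      ∑ i : Fin n, ∑ j : Fin n, ∑ l : Fin n, ‖X i - X l‖ * |Y j - Y l|) =
    ((n0 : ℝ) ^ 2 * (n1 : ℝ) ^ 2 / (n : ℝ) ^ 4) *
      ((4 / ((n0 : ℝ) * (n1 : ℝ))) *
          (∑ i ∈ Finset.univ.filter (fun i => Y i = 1),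
            ∑ j ∈ Finset.univ.filter (fun j => Y j = 0), ‖X i - X j‖) -
        (2 / (n0 : ℝ) ^ 2) *
          (∑ i ∈ Finset.univ.filter (fun i => Y i = 0),
            ∑ j ∈ Finset.univ.filter (fun j => Y j = 0), ‖X i - X j‖) -
        (2 / (n1 : ℝ) ^ 2) *
          (∑ i ∈ Finset.univ.filter (fun i => Y i = 1),
            ∑ j ∈ Finset.univ.filter (fun j => Y j = 1), ‖X i - X j‖)) := by
  classical
  set A := Finset.univ.filter (fun i : Fin n => Y i = 1) with hAdef
  set B := Finset.univ.filter (fun i : Fin n => Y i = 0) with hBdef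
  have hA1 : ∀ i ∈ A, Y i = 1 := fun i hi => (Finset.mem_filter.mp hi).2
  have hB0 : ∀ i ∈ B, Y i = 0 := fun i hi => (Finset.mem_filter.mp hi).2
  have hBeq : Finset.univ.filter (fun i : Fin n => ¬ Y i = 1) = B := by
    ext i
    simp only [Finset.mem_filter, Finset.mem_univ, true_and, hBdef]
    rcases hY i with h | h <;> simp [h]
  have hsplit : ∀ f : Fin n → ℝ, ∑ i, f i = (∑ i ∈ A, f i) + (∑ i ∈ B, f i) := by
    intro f
    rw [← Finset.sum_filter_add_sum_filter_not Finset.univ (fun i => Y i = 1) f, hBeq]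
  have hcardn : n1 + n0 = n := by
    have h := Finset.card_filter_add_card_filter_not
      (s := (Finset.univ : Finset (Fin n))) (p := fun i : Fin n => Y i = 1)
    rw [hBeq] at h
    simpa [hn1, hn0] using h
  set SAA := ∑ i ∈ A, ∑ j ∈ A, ‖X i - X j‖ with hSAA
  set SBB := ∑ i ∈ B, ∑ j ∈ B, ‖X i - X j‖ with hSBB
  set SAB := ∑ i ∈ A, ∑ j ∈ B, ‖X i - X j‖ with hSAB
  have hSBA : ∑ i ∈ B, ∑ j ∈ A, ‖X i - X j‖ = SAB := by
    rw [Finset.sum_comm, hSAB]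
    exact Finset.sum_congr rfl fun i _ => Finset.sum_congr rfl fun j _ => by
      rw [norm_sub_rev]
  -- e1
  have e1 : ∑ i : Fin n, ∑ j : Fin n, ‖X i - X j‖ * |Y i - Y j| = 2 * SAB := by
    rw [hsplit]
    have hAA : ∑ i ∈ A, ∑ j : Fin n, ‖X i - X j‖ * |Y i - Y j|
        = ∑ i ∈ A, ((∑ j ∈ A, ‖X i - X j‖ * |Y i - Y j|)
          + ∑ j ∈ B, ‖X i - X j‖ * |Y i - Y j|) :=
      Finset.sum_congr rfl fun i _ => hsplit _
    have hBB : ∑ i ∈ B, ∑ j : Fin n, ‖X i - X j‖ * |Y i - Y j|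
        = ∑ i ∈ B, ((∑ j ∈ A, ‖X i - X j‖ * |Y i - Y j|)
          + ∑ j ∈ B, ‖X i - X j‖ * |Y i - Y j|) :=
      Finset.sum_congr rfl fun i _ => hsplit _
    rw [hAA, hBB, Finset.sum_add_distrib, Finset.sum_add_distrib]
    have z1 : ∑ i ∈ A, ∑ j ∈ A, ‖X i - X j‖ * |Y i - Y j| = 0 :=
      Finset.sum_eq_zero fun i hi => Finset.sum_eq_zero fun j hj => by
        rw [hA1 i hi, hA1 j hj]; simp
    have z2 : ∑ i ∈ B, ∑ j ∈ B, ‖X i - X j‖ * |Y i - Y j| = 0 :=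
      Finset.sum_eq_zero fun i hi => Finset.sum_eq_zero fun j hj => by
        rw [hB0 i hi, hB0 j hj]; simp
    have o1 : ∑ i ∈ A, ∑ j ∈ B, ‖X i - X j‖ * |Y i - Y j| = SAB := by
      rw [hSAB]
      exact Finset.sum_congr rfl fun i hi => Finset.sum_congr rfl fun j hj => by
        rw [hA1 i hi, hB0 j hj]; norm_num
    have o2 : ∑ i ∈ B, ∑ j ∈ A, ‖X i - X j‖ * |Y i - Y j| = SAB := by
      rw [← hSBA]
      exact Finset.sum_congr rfl fun i hi => Finset.sum_congr rfl fun j hj => by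
        rw [hB0 i hi, hA1 j hj]; norm_num
    rw [z1, z2, o1, o2]; ring
  -- e2
  have e2 : ∑ i : Fin n, ∑ j : Fin n, |Y i - Y j| = 2 * (n1 : ℝ) * n0 := by
    rw [hsplit]
    have hAA : ∑ i ∈ A, ∑ j : Fin n, |Y i - Y j|
        = ∑ i ∈ A, ((∑ j ∈ A, |Y i - Y j|) + ∑ j ∈ B, |Y i - Y j|) :=
      Finset.sum_congr rfl fun i _ => hsplit _
    have hBB : ∑ i ∈ B, ∑ j : Fin n, |Y i - Y j|
        = ∑ i ∈ B, ((∑ j ∈ A, |Y i - Y j|) + ∑ j ∈ B, |Y i - Y j|) :=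
      Finset.sum_congr rfl fun i _ => hsplit _
    rw [hAA, hBB, Finset.sum_add_distrib, Finset.sum_add_distrib]
    have z1 : ∑ i ∈ A, ∑ j ∈ A, |Y i - Y j| = 0 :=
      Finset.sum_eq_zero fun i hi => Finset.sum_eq_zero fun j hj => by
        rw [hA1 i hi, hA1 j hj]; simp
    have z2 : ∑ i ∈ B, ∑ j ∈ B, |Y i - Y j| = 0 :=
      Finset.sum_eq_zero fun i hi => Finset.sum_eq_zero fun j hj => by
        rw [hB0 i hi, hB0 j hj]; simp
    have o1 : ∑ i ∈ A, ∑ j ∈ B, |Y i - Y j| = (n1 : ℝ) * n0 := by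
      have : ∀ i ∈ A, ∑ j ∈ B, |Y i - Y j| = (n0 : ℝ) := by
        intro i hi
        have : ∑ j ∈ B, |Y i - Y j| = ∑ j ∈ B, (1 : ℝ) :=
          Finset.sum_congr rfl fun j hj => by rw [hA1 i hi, hB0 j hj]; norm_num
        rw [this, Finset.sum_const, hn0]; simp
      rw [Finset.sum_congr rfl this, Finset.sum_const, hn1]; simp [mul_comm]
    have o2 : ∑ i ∈ B, ∑ j ∈ A, |Y i - Y j| = (n0 : ℝ) * n1 := by
      have : ∀ i ∈ B, ∑ j ∈ A, |Y i - Y j| = (n1 : ℝ) := by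
        intro i hi
        have : ∑ j ∈ A, |Y i - Y j| = ∑ j ∈ A, (1 : ℝ) :=
          Finset.sum_congr rfl fun j hj => by rw [hB0 i hi, hA1 j hj]; norm_num
        rw [this, Finset.sum_const, hn1]; simp
      rw [Finset.sum_congr rfl this, Finset.sum_const, hn0]; simp [mul_comm]
    rw [z1, z2, o1, o2]; ring
  -- e3
  have e3 : ∑ i : Fin n, ∑ j : Fin n, ‖X i - X j‖ = SAA + 2 * SAB + SBB := by
    rw [hsplit]
    have hAA : ∑ i ∈ A, ∑ j : Fin n, ‖X i - X j‖
        = ∑ i ∈ A, ((∑ j ∈ A, ‖X i - X j‖) + ∑ j ∈ B, ‖X i - X j‖) :=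
      Finset.sum_congr rfl fun i _ => hsplit _
    have hBB : ∑ i ∈ B, ∑ j : Fin n, ‖X i - X j‖
        = ∑ i ∈ B, ((∑ j ∈ A, ‖X i - X j‖) + ∑ j ∈ B, ‖X i - X j‖) :=
      Finset.sum_congr rfl fun i _ => hsplit _
    rw [hAA, hBB, Finset.sum_add_distrib, Finset.sum_add_distrib, hSBA, ← hSAA,
      ← hSAB, ← hSBB]
    ring
  -- e4
  have hlabel : ∀ l : Fin n, ∑ j : Fin n, |Y j - Y l|
      = if Y l = 1 then (n0 : ℝ) else (n1 : ℝ) := by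
    intro l
    rcases hY l with h | h
    · rw [if_neg (by rw [h]; norm_num), hsplit]
      have z : ∑ j ∈ B, |Y j - Y l| = 0 :=
        Finset.sum_eq_zero fun j hj => by rw [hB0 j hj, h]; simp
      have o : ∑ j ∈ A, |Y j - Y l| = (n1 : ℝ) := by
        have : ∑ j ∈ A, |Y j - Y l| = ∑ j ∈ A, (1 : ℝ) :=
          Finset.sum_congr rfl fun j hj => by rw [hA1 j hj, h]; norm_num
        rw [this, Finset.sum_const, hn1]; simp
      rw [z, o, add_zero]
    · rw [if_pos h, hsplit]
      have z : ∑ j ∈ A, |Y j - Y l| = 0 :=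
        Finset.sum_eq_zero fun j hj => by rw [hA1 j hj, h]; simp
      have o : ∑ j ∈ B, |Y j - Y l| = (n0 : ℝ) := by
        have : ∑ j ∈ B, |Y j - Y l| = ∑ j ∈ B, (1 : ℝ) :=
          Finset.sum_congr rfl fun j hj => by rw [hB0 j hj, h]; norm_num
        rw [this, Finset.sum_const, hn0]; simp
      rw [z, o, zero_add]
  have e4 : ∑ i : Fin n, ∑ j : Fin n, ∑ l : Fin n, ‖X i - X l‖ * |Y j - Y l|
      = (n0 : ℝ) * (SAA + SAB) + (n1 : ℝ) * (SAB + SBB) := by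
    have step1 : ∀ i : Fin n, ∑ j : Fin n, ∑ l : Fin n, ‖X i - X l‖ * |Y j - Y l|
        = ∑ l : Fin n, ‖X i - X l‖ * (∑ j : Fin n, |Y j - Y l|) := by
      intro i
      rw [Finset.sum_comm]
      exact Finset.sum_congr rfl fun l _ => by rw [← Finset.mul_sum]
    rw [Finset.sum_congr rfl fun i _ => step1 i]
    have step2 : ∀ i : Fin n, ∑ l : Fin n, ‖X i - X l‖ * (∑ j : Fin n, |Y j - Y l|)
        = (n0 : ℝ) * (∑ l ∈ A, ‖X i - X l‖) + (n1 : ℝ) * (∑ l ∈ B, ‖X i - X l‖) := by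
      intro i
      rw [hsplit]
      have hA' : ∑ l ∈ A, ‖X i - X l‖ * (∑ j : Fin n, |Y j - Y l|)
          = (n0 : ℝ) * ∑ l ∈ A, ‖X i - X l‖ := by
        rw [Finset.mul_sum]
        exact Finset.sum_congr rfl fun l hl => by
          rw [hlabel l, if_pos (hA1 l hl)]; ring
      have hB' : ∑ l ∈ B, ‖X i - X l‖ * (∑ j : Fin n, |Y j - Y l|)
          = (n1 : ℝ) * ∑ l ∈ B, ‖X i - X l‖ := by
        rw [Finset.mul_sum]
        exact Finset.sum_congr rfl fun l hl => by
          rw [hlabel l, if_neg (by rw [hB0 l hl]; norm_num)]; ring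
      rw [hA', hB']
    rw [Finset.sum_congr rfl fun i _ => step2 i, Finset.sum_add_distrib,
      ← Finset.mul_sum, ← Finset.mul_sum]
    have s1 : ∑ i : Fin n, ∑ l ∈ A, ‖X i - X l‖ = SAA + SAB := by
      rw [hsplit, ← hSAA, hSBA]
    have s2 : ∑ i : Fin n, ∑ l ∈ B, ‖X i - X l‖ = SAB + SBB := by
      rw [hsplit, ← hSAB, ← hSBB]
    rw [s1, s2]
  rw [e1, e2, e3, e4]
  -- now pure algebra
  have hn : (n : ℝ) = (n1 : ℝ) + n0 := by
    rw [← hcardn]; push_cast; ring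
  by_cases h1 : n1 = 0
  · have hAempty : A = ∅ := Finset.card_eq_zero.mp (by rw [← hn1, h1])
    have hSAA0 : SAA = 0 := by rw [hSAA, hAempty]; simp
    have hSAB0 : SAB = 0 := by rw [hSAB, hAempty]; simp
    rw [hSAA0, hSAB0, h1]
    push_cast
    ring
  by_cases h0 : n0 = 0
  · have hBempty : B = ∅ := Finset.card_eq_zero.mp (by rw [← hn0, h0])
    have hSBB0 : SBB = 0 := by rw [hSBB, hBempty]; simp
    have hSAB0 : SAB = 0 := by rw [hSAB, hBempty]; simp
    rw [hSBB0, hSAB0, h0]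
    push_cast
    ring
  · have h1' : (n1 : ℝ) ≠ 0 := Nat.cast_ne_zero.mpr h1
    have h0' : (n0 : ℝ) ≠ 0 := Nat.cast_ne_zero.mpr h0
    have hn' : (n : ℝ) ≠ 0 := by
      rw [hn]
      positivity
    rw [hn]
    field_simp
    ring
end
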